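/- arXiv:0909.1655 — 2 statements merged into one kernel-verified Lean document; each statement's English description precedes it below -/
import Mathlib

section
/- Let L be the linear functional with moments mu_{(t+1)m} = binomial((t+1)m, m) and mu_n = 0 when t+1 does not divide n. Then for m > nt, L(T^{(t)}_m(x) T^{(t)}_n(x)) = 0, and L(T^{(t)}_{nt}(x) T^{(t)}_n(x)) = t+1 for all n >= 1. -/
open Polynomial

/-- The aerated `(t+1)`-reciprocal binomial coefficients:
`μ_{(t+1)m} = binom((t+1)m, m)` and `μ_n = 0` when `(t+1) ∤ n`. -/
def cycMoment (t n : ℕ) : ℚ :=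
  if (t + 1) ∣ n then (n.choose (n / (t + 1)) : ℚ) else 0

/-- The linear functional on polynomials with moments `cycMoment`. -/
noncomputable def Lfun (t : ℕ) (p : Polynomial ℚ) : ℚ :=
  ∑ i ∈ p.support, p.coeff i * cycMoment t i

open Finset LaurentPolynomial

namespace ChebAux

/-- `A t s m` = sum of first parts over compositions of `m` into `s` parts in `[1,t]`. -/
def A (t : ℕ) : ℕ → ℕ → ℕ
  | 0, _ => 0
  | 1, m => if 1 ≤ m ∧ m ≤ t then m else 0
  | (s+2), m => ∑ i ∈ Finset.range t, A t (s+1) (m - (i+1))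

lemma A_zero_right (t : ℕ) : ∀ s, A t s 0 = 0
  | 0 => rfl
  | 1 => by simp [A]
  | (s+2) => by simp [A, Nat.zero_sub, A_zero_right t (s+1)]

lemma A_eq_zero_of_big (t : ℕ) : ∀ s m, t * s < m → A t s m = 0
  | 0, m, h => rfl
  | 1, m, h => by
      rw [A, if_neg]; rintro ⟨-, h2⟩; omega
  | (s+2), m, h => by
      rw [A]
      refine Finset.sum_eq_zero fun i hi => A_eq_zero_of_big t (s+1) _ ?_
      simp only [Finset.mem_range] at hi
      have hexp : t * (s+2) = t * (s+1) + t := by ring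
      omega

lemma A_eq_t (t : ℕ) (ht : 1 ≤ t) : ∀ s m, 1 ≤ s → t * s = m → A t s m = t
  | 0, m, hs, _ => by omega
  | 1, m, _, hm => by
      rw [A, if_pos (by omega : 1 ≤ m ∧ m ≤ t)]; omega
  | (s+2), m, _, hm => by
      have hexp : t * (s+2) = t * (s+1) + t := by ring
      rw [A]
      rw [Finset.sum_eq_single (t-1)]
      · have h1 : m - (t - 1 + 1) = t * (s+1) := by omega
        rw [h1, A_eq_t t ht (s+1) _ (by omega) rfl]
      · intro i hi hne
        simp only [Finset.mem_range] at hi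
        refine A_eq_zero_of_big t (s+1) _ ?_
        omega
      · intro h
        simp only [Finset.mem_range] at h
        omega

lemma A_rec {t m : ℕ} (hm : t < m) (s : ℕ) :
    A t (s+1) (m+1) + A t s (m - t) = A t (s+1) m + A t s m := by
  cases s with
  | zero =>
      have h1 : A t 1 (m+1) = 0 := by rw [A, if_neg]; omega
      have h2 : A t 1 m = 0 := by rw [A, if_neg]; omega
      have h0 : ∀ x, A t 0 x = 0 := fun _ => rfl
      simp [h1, h2, h0]
  | succ s =>
      show A t (s+2) (m+1) + A t (s+1) (m - t) = A t (s+2) m + A t (s+1) m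
      rw [A, A]
      have hL : ∀ i, m + 1 - (i+1) = m - i := fun i => by omega
      simp only [hL]
      have e1 : ∑ i ∈ Finset.range t, A t (s+1) (m - i) + A t (s+1) (m - t)
          = ∑ i ∈ Finset.range (t+1), A t (s+1) (m - i) := (Finset.sum_range_succ _ t).symm
      have e2 : ∑ i ∈ Finset.range t, A t (s+1) (m - (i+1)) + A t (s+1) m
          = ∑ i ∈ Finset.range (t+1), A t (s+1) (m - i) := by
        rw [Finset.sum_range_succ' (fun i => A t (s+1) (m - i)) t]
        simp
      rw [e1, ← e2]

lemma A_eq_zero_of_gt (t : ℕ) : ∀ s m, m < s → A t s m = 0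
  | 0, m, h => rfl
  | 1, m, h => by rw [A, if_neg]; omega
  | (s+2), m, h => by
      rw [A]
      exact Finset.sum_eq_zero fun i hi => A_eq_zero_of_gt t (s+1) _ (by omega)

/-- hockey-stick style helper -/
lemma sum_choose_helper : ∀ (n : ℕ) {b s : ℕ}, 1 ≤ s → b ≤ n →
    ∑ i ∈ Finset.range n, (b - i).choose s = (b+1).choose (s+1)
  | 0, b, s, hs, hb => by
      have : b = 0 := by omega
      subst this
      simp [Nat.choose_eq_zero_of_lt (by omega : 1 < s + 1)]
  | (n+1), b, s, hs, hb => by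
      rw [Finset.sum_range_succ' (fun i => (b - i).choose s) n]
      rcases Nat.eq_zero_or_pos b with hb0 | hb0
      · subst hb0
        simp [Nat.choose_eq_zero_of_lt (show 0 < s by omega),
          Nat.choose_eq_zero_of_lt (show 1 < s+1 by omega)]
      · obtain ⟨b', rfl⟩ : ∃ b', b = b' + 1 := ⟨b - 1, by omega⟩
        have hstep : ∀ i, b' + 1 - (i+1) = b' - i := fun i => by omega
        simp only [hstep, Nat.sub_zero]
        rw [sum_choose_helper n hs (by omega)]
        rw [Nat.choose_succ_succ (b'+1) s]
        simp only [Nat.succ_eq_add_one]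
        omega

lemma A_eq_choose_le (t : ℕ) (ht : 1 ≤ t) : ∀ s m, 1 ≤ s → m ≤ t → A t s m = m.choose s
  | 0, m, hs, _ => by omega
  | 1, m, _, hm => by
      rw [A]
      rcases Nat.eq_zero_or_pos m with rfl | h1
      · simp
      · rw [if_pos ⟨h1, hm⟩, Nat.choose_one_right]
  | (s+2), m, _, hm => by
      rw [A]
      have hIH : ∀ i : ℕ, A t (s+1) (m - (i+1)) = (m - (i+1)).choose (s+1) :=
        fun i => A_eq_choose_le t ht (s+1) _ (by omega) (by omega)
      simp only [hIH]
      rcases Nat.eq_zero_or_pos m with rfl | h1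
      · simp [Nat.choose_eq_zero_of_lt (show 0 < s+1 by omega),
          Nat.choose_eq_zero_of_lt (show 0 < s+2 by omega)]
      · obtain ⟨b, rfl⟩ : ∃ b, m = b + 1 := ⟨m - 1, by omega⟩
        have hstep : ∀ i : ℕ, b + 1 - (i+1) = b - i := fun i => by omega
        simp only [hstep]
        exact sum_choose_helper t (by omega) (by omega)

lemma A_choose_t_succ (t : ℕ) (ht : 1 ≤ t) : ∀ s, 2 ≤ s → A t s (t+1) = (t+1).choose s
  | 0, hs => by omega
  | 1, hs => by omega
  | (s+2), _ => by
      rw [A]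
      have hstep : ∀ i : ℕ, t + 1 - (i+1) = t - i := fun i => by omega
      have hIH : ∀ i : ℕ, i < t → A t (s+1) (t - i) = (t - i).choose (s+1) :=
        fun i hi => A_eq_choose_le t ht (s+1) _ (by omega) (by omega)
      rw [Finset.sum_congr rfl (fun i hi => by
        rw [hstep i, hIH i (Finset.mem_range.mp hi)])]
      exact sum_choose_helper t (by omega) (by omega)


lemma A_zero_left (t : ℕ) : ∀ m, A t 0 m = 0 := fun _ => rfl

noncomputable def u (t : ℕ) : LaurentPolynomial ℚ :=
  LaurentPolynomial.T (-1) + LaurentPolynomial.T (t : ℤ)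

lemma apply_smul (a : ℚ) (p : LaurentPolynomial ℚ) (c : ℤ) :
    (a • p : LaurentPolynomial ℚ).coeff c = a * p.coeff c := by
  rw [AddMonoidAlgebra.coeff_smul, Finsupp.smul_apply, smul_eq_mul]

lemma apply_mul_T (p : LaurentPolynomial ℚ) (a c : ℤ) :
    (p * LaurentPolynomial.T a : LaurentPolynomial ℚ).coeff c = p.coeff (c - a) := by
  have h : (LaurentPolynomial.T a : LaurentPolynomial ℚ) = AddMonoidAlgebra.single a 1 := rfl
  rw [h, AddMonoidAlgebra.coeff_mul_single_apply, mul_one, ← sub_eq_add_neg]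

lemma u_pow (t k : ℕ) : u t ^ k =
    ∑ s ∈ Finset.range (k+1),
      (k.choose s : ℚ) • LaurentPolynomial.T ((s:ℤ)*(t+1) - k) := by
  rw [u, add_comm, add_pow]
  refine Finset.sum_congr rfl fun s hs => ?_
  simp only [Finset.mem_range] at hs
  rw [T_pow, T_pow, ← T_add]
  have he : (s:ℤ) * (t:ℤ) + (↑(k - s) * (-1)) = (s:ℤ)*(t+1) - k := by
    have h2 : ((k - s : ℕ) : ℤ) = (k:ℤ) - s := by omega
    rw [h2]; ring
  rw [he, mul_comm, ← nsmul_eq_mul, Nat.cast_smul_eq_nsmul ℚ]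


lemma u_pow_apply (t k : ℕ) (c : ℤ) :
    (u t ^ k).coeff c = ∑ s ∈ Finset.range (k+1),
      (if (s:ℤ)*(t+1) - k = c then (k.choose s : ℚ) else 0) := by
  rw [u_pow, AddMonoidAlgebra.coeff_sum, Finset.sum_apply']
  refine Finset.sum_congr rfl fun s _ => ?_
  rw [apply_smul, LaurentPolynomial.T_apply]
  split <;> simp

lemma exp_inj {t : ℕ} {s s0 : ℕ} (h : (s:ℤ)*(t+1) = (s0:ℤ)*(t+1)) : s = s0 := by
  have := mul_right_cancel₀ (show ((t:ℤ)+1) ≠ 0 by positivity) h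
  exact_mod_cast this

lemma u_pow_apply_eq (t k s0 : ℕ) (hs0 : s0 ≤ k) (c : ℤ)
    (hc : (s0:ℤ)*(t+1) - k = c) : (u t ^ k).coeff c = k.choose s0 := by
  rw [u_pow_apply]
  rw [Finset.sum_eq_single s0]
  · rw [if_pos hc]
  · intro s _ hne
    rw [if_neg]
    intro h
    exact hne (exp_inj (t := t) (by omega))
  · intro h
    simp only [Finset.mem_range] at h
    omega

lemma u_pow_apply_zero (t k : ℕ) (c : ℤ)
    (h : ∀ s : ℕ, s ≤ k → (s:ℤ)*(t+1) - k ≠ c) : (u t ^ k).coeff c = 0 := by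
  rw [u_pow_apply]
  refine Finset.sum_eq_zero fun s hs => ?_
  simp only [Finset.mem_range] at hs
  rw [if_neg (h s (by omega))]

lemma Lfun_eq (t : ℕ) (p : Polynomial ℚ) :
    Lfun t p = (Polynomial.aeval (u t) p).coeff 0 := by
  rw [Lfun, Polynomial.aeval_def, Polynomial.eval₂_eq_sum, Polynomial.sum, AddMonoidAlgebra.coeff_sum, Finset.sum_apply']
  refine Finset.sum_congr rfl fun i _ => ?_
  rw [← Algebra.smul_def, apply_smul]
  congr 1
  -- ⊢ cycMoment t i = (u t ^ i) 0
  by_cases hd : (t + 1) ∣ i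
  · rw [cycMoment, if_pos hd]
    obtain ⟨j, rfl⟩ := hd
    have hj : (t+1)*j/(t+1) = j := Nat.mul_div_cancel_left j (by omega)
    rw [hj]
    rw [u_pow_apply_eq t ((t+1)*j) j (by nlinarith) 0 (by push_cast; ring)]
  · rw [cycMoment, if_neg hd]
    rw [u_pow_apply_zero]
    intro s hs hc
    apply hd
    have h2 : ((s * (t+1) : ℕ) : ℤ) = i := by push_cast; omega
    have h3 : s * (t+1) = i := by exact_mod_cast h2
    exact ⟨s, by rw [← h3]; ring⟩


noncomputable def Gfun (t m : ℕ) : LaurentPolynomial ℚ :=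
  ∑ s ∈ Finset.range (m+2), (A t s m : ℚ) • LaurentPolynomial.T ((s:ℤ)*(t+1) - m)

lemma Gfun_eq (t m K : ℕ) (hK : m + 2 ≤ K) :
    Gfun t m = ∑ s ∈ Finset.range K,
      (A t s m : ℚ) • LaurentPolynomial.T ((s:ℤ)*(t+1) - m) := by
  rw [Gfun]
  refine Finset.sum_subset (Finset.range_subset_range.mpr hK) fun s _ hs => ?_
  simp only [Finset.mem_range, not_lt] at hs
  rw [A_eq_zero_of_gt t s m (by omega)]
  simp

lemma u_pow_eq_ext (t k K : ℕ) (hK : k + 1 ≤ K) : u t ^ k =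
    ∑ s ∈ Finset.range K,
      (k.choose s : ℚ) • LaurentPolynomial.T ((s:ℤ)*(t+1) - k) := by
  rw [u_pow]
  refine Finset.sum_subset (Finset.range_subset_range.mpr hK) fun s _ hs => ?_
  simp only [Finset.mem_range, not_lt] at hs
  rw [Nat.choose_eq_zero_of_lt (by omega)]
  simp

theorem aeval_T_eq (t : ℕ) (ht : 1 ≤ t) (T : ℕ → Polynomial ℚ)
    (hTinit : ∀ i ≤ t, T i = X ^ i)
    (hTt1 : T (t + 1) = X ^ (t + 1) - ((t : Polynomial ℚ) + 1))
    (hTrec : ∀ n, t < n → T (n + 1) = X * T n - T (n - t)) :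
    ∀ m, Polynomial.aeval (u t) (T m) =
      LaurentPolynomial.T (-(m:ℤ)) + Gfun t m := by
  intro m
  induction m using Nat.strong_induction_on with
  | _ m IH =>
  rcases le_or_gt m t with hm | hm
  · -- case m ≤ t
    rw [hTinit m hm, map_pow, aeval_X, u_pow_eq_ext t m (m+2) (by omega), Gfun]
    have hsplit : ∀ s ∈ Finset.range (m+2),
        (m.choose s : ℚ) • LaurentPolynomial.T ((s:ℤ)*(t+1) - m) =
        ((if s = 0 then (1:ℚ) else 0) • LaurentPolynomial.T ((s:ℤ)*(t+1) - m) : LaurentPolynomial ℚ) +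
        (A t s m : ℚ) • LaurentPolynomial.T ((s:ℤ)*(t+1) - m) := by
      intro s _
      rw [← add_smul]
      congr 1
      cases s with
      | zero => simp [A_zero_left]
      | succ s =>
          rw [A_eq_choose_le t ht (s+1) m (by omega) hm]
          simp
    rw [Finset.sum_congr rfl hsplit, Finset.sum_add_distrib]
    congr 1
    rw [Finset.sum_eq_single 0]
    · norm_num
    · intro s _ hs
      rw [if_neg hs, zero_smul]
    · intro h
      simp at h
  · rcases Nat.lt_or_ge m (t+2) with hm2 | hm2
    · -- case m = t+1
      have hmx : m = t + 1 := by omega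
      subst hmx
      rw [hTt1, map_sub, map_pow, aeval_X]
      have hc : (Polynomial.aeval (u t)) ((t : Polynomial ℚ) + 1)
          = ((t:ℚ)+1) • (1 : LaurentPolynomial ℚ) := by
        simp [Algebra.smul_def]
      rw [hc, u_pow_eq_ext t (t+1) (t+3) (by omega), Gfun]
      have hsplit : ∀ s ∈ Finset.range (t+3),
          ((t+1).choose s : ℚ) • LaurentPolynomial.T ((s:ℤ)*(t+1) - (t+1:ℕ)) =
          ((if s = 0 then (1:ℚ) else 0) • LaurentPolynomial.T ((s:ℤ)*(t+1) - (t+1:ℕ)) : LaurentPolynomial ℚ) +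
          (if s = 1 then ((t:ℚ)+1) else 0) • LaurentPolynomial.T ((s:ℤ)*(t+1) - (t+1:ℕ)) +
          (A t s (t+1) : ℚ) • LaurentPolynomial.T ((s:ℤ)*(t+1) - (t+1:ℕ)) := by
        intro s _
        rw [← add_smul, ← add_smul]
        congr 1
        match s with
        | 0 => simp [A_zero_left]
        | 1 =>
            rw [A_eq_zero_of_big t 1 (t+1) (by omega)]
            norm_num
        | (s+2) =>
            rw [A_choose_t_succ t ht (s+2) (by omega)]
            simp
      rw [Finset.sum_congr rfl hsplit, Finset.sum_add_distrib, Finset.sum_add_distrib]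
      have h0 : (∑ s ∈ Finset.range (t+3),
          ((if s = 0 then (1:ℚ) else 0) • LaurentPolynomial.T ((s:ℤ)*(t+1) - (t+1:ℕ)) : LaurentPolynomial ℚ)) =
          LaurentPolynomial.T (-((t+1:ℕ):ℤ)) := by
        rw [Finset.sum_eq_single 0]
        · norm_num
        · intro s _ hs; rw [if_neg hs, zero_smul]
        · intro h; simp at h
      have h1 : (∑ s ∈ Finset.range (t+3),
          ((if s = 1 then ((t:ℚ)+1) else 0) • LaurentPolynomial.T ((s:ℤ)*(t+1) - (t+1:ℕ)) : LaurentPolynomial ℚ)) =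
          ((t:ℚ)+1) • (1 : LaurentPolynomial ℚ) := by
        rw [Finset.sum_eq_single 1]
        · rw [if_pos rfl]
          congr 1
          rw [show ((1:ℕ):ℤ)*((t:ℤ)+1) - ((t+1:ℕ):ℤ) = 0 by push_cast; ring,
            LaurentPolynomial.T_zero]
        · intro s _ hs; rw [if_neg hs, zero_smul]
        · intro h; simp at h
      rw [h0, h1]
      abel
    · -- inductive case: m = n+1, n > t
      obtain ⟨n, rfl⟩ : ∃ n, m = n + 1 := ⟨m - 1, by omega⟩
      have hn : t < n := by omega
      rw [hTrec n hn, map_sub, map_mul, aeval_X, IH n (by omega), IH (n - t) (by omega)]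
      have hu : u t * LaurentPolynomial.T (-(n:ℤ)) =
          LaurentPolynomial.T (-((n+1:ℕ):ℤ)) + LaurentPolynomial.T (-((n-t:ℕ):ℤ)) := by
        rw [u, add_mul, ← T_add, ← T_add]
        congr 2
        · push_cast; ring
        · have : ((n - t : ℕ) : ℤ) = (n:ℤ) - t := by omega
          rw [this]; ring
      rw [mul_add, hu]
      have key : u t * Gfun t n - Gfun t (n - t) = Gfun t (n+1) := by
        rw [Gfun_eq t n (n+3) (by omega), Gfun_eq t (n-t) (n+3) (by omega),
          Gfun_eq t (n+1) (n+3) (by omega)]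
        rw [Finset.mul_sum]
        have hterm : ∀ s : ℕ, u t * ((A t s n : ℚ) • LaurentPolynomial.T ((s:ℤ)*(t+1) - n)) =
            ((A t s n : ℚ) • LaurentPolynomial.T ((s:ℤ)*(t+1) - ((n+1:ℕ):ℤ)) : LaurentPolynomial ℚ)
            + (A t s n : ℚ) • LaurentPolynomial.T (((s+1:ℕ):ℤ)*(t+1) - ((n+1:ℕ):ℤ)) := by
          intro s
          rw [mul_smul_comm, u, add_mul, ← T_add, ← T_add, smul_add]
          congr 3
          · push_cast; ring
          · push_cast; ring
        rw [Finset.sum_congr rfl (fun s _ => hterm s), Finset.sum_add_distrib]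
        have hsh : ∀ s ∈ Finset.range (n+3),
            (A t s (n-t) : ℚ) • LaurentPolynomial.T ((s:ℤ)*(t+1) - ((n-t:ℕ):ℤ)) =
            ((A t s (n-t) : ℚ) • LaurentPolynomial.T (((s+1:ℕ):ℤ)*(t+1) - ((n+1:ℕ):ℤ)) : LaurentPolynomial ℚ) := by
          intro s _
          congr 2
          have : ((n - t : ℕ) : ℤ) = (n:ℤ) - t := by omega
          rw [this]; push_cast; ring
        rw [Finset.sum_congr rfl hsh]
        rw [sub_eq_iff_eq_add]
        rw [Finset.sum_range_succ' (fun s => (A t s n : ℚ) •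
          LaurentPolynomial.T ((s:ℤ)*(t+1) - ((n+1:ℕ):ℤ))) (n+2)]
        rw [Finset.sum_range_succ' (fun s => (A t s (n+1) : ℚ) •
          LaurentPolynomial.T ((s:ℤ)*(t+1) - ((n+1:ℕ):ℤ))) (n+2)]
        rw [Finset.sum_range_succ (fun s => (A t s n : ℚ) •
          LaurentPolynomial.T (((s+1:ℕ):ℤ)*(t+1) - ((n+1:ℕ):ℤ))) (n+2)]
        rw [Finset.sum_range_succ (fun s => (A t s (n-t) : ℚ) •
          LaurentPolynomial.T (((s+1:ℕ):ℤ)*(t+1) - ((n+1:ℕ):ℤ))) (n+2)]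
        rw [A_zero_left t n, A_zero_left t (n+1),
          A_eq_zero_of_gt t (n+2) n (by omega),
          A_eq_zero_of_gt t (n+2) (n-t) (by omega)]
        simp only [Nat.cast_zero, zero_smul, add_zero]
        rw [← Finset.sum_add_distrib, ← Finset.sum_add_distrib]
        refine Finset.sum_congr rfl fun s _ => ?_
        rw [← add_smul, ← add_smul]
        congr 1
        have hr := A_rec hn s
        have hr' : ((A t (s+1) (n+1) : ℚ)) + A t s (n - t) = A t (s+1) n + A t s n := by
          exact_mod_cast hr
        linarith [hr']
      rw [← key]
      push_cast
      abel


section Main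
variable (t : ℕ) (ht : 1 ≤ t) (T : ℕ → Polynomial ℚ)
    (hTinit : ∀ i ≤ t, T i = X ^ i)
    (hTt1 : T (t + 1) = X ^ (t + 1) - ((t : Polynomial ℚ) + 1))
    (hTrec : ∀ n, t < n → T (n + 1) = X * T n - T (n - t))

include ht hTinit hTt1 hTrec

lemma fval_eq (m k : ℕ) : Lfun t (T m * X ^ k) =
    (u t ^ k).coeff (m : ℤ) + ∑ s ∈ Finset.range (m+2),
      (A t s m : ℚ) * (u t ^ k).coeff ((m : ℤ) - (s:ℤ)*(t+1)) := by
  rw [Lfun_eq, map_mul, map_pow, aeval_X,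
    aeval_T_eq t ht T hTinit hTt1 hTrec m, add_mul, AddMonoidAlgebra.coeff_add, Finsupp.add_apply]
  congr 1
  · rw [mul_comm, apply_mul_T]
    norm_num
  · rw [Gfun, Finset.sum_mul, AddMonoidAlgebra.coeff_sum, Finset.sum_apply']
    refine Finset.sum_congr rfl fun s _ => ?_
    rw [smul_mul_assoc, apply_smul,
      mul_comm (LaurentPolynomial.T ((s:ℤ)*(t+1) - (m:ℤ))) (u t ^ k), apply_mul_T]
    congr 1
    ring

lemma main1 (m k : ℕ) (h : k * t < m) : Lfun t (T m * X ^ k) = 0 := by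
  rw [fval_eq t ht T hTinit hTt1 hTrec]
  have hkt : ((k*t : ℕ) : ℤ) < (m : ℤ) := by exact_mod_cast h
  push_cast at hkt
  rw [u_pow_apply_zero t k m (by
    intro s hs heq
    have hs' : (s:ℤ) ≤ (k:ℤ) := by exact_mod_cast hs
    have h2 : (s:ℤ)*(t+1) ≤ (k:ℤ)*(t+1) :=
      mul_le_mul_of_nonneg_right hs' (by positivity)
    have h3 : (k:ℤ)*(t+1) = k*t + k := by ring
    linarith)]
  rw [Finset.sum_eq_zero, add_zero]
  intro s _
  by_cases hA : A t s m = 0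
  · rw [hA]; norm_num
  · have hst : m ≤ t * s := by
      by_contra hc
      exact hA (A_eq_zero_of_big t s m (by omega))
    have hst' : (m : ℤ) ≤ (t:ℤ) * s := by exact_mod_cast hst
    rw [u_pow_apply_zero t k _ (by
      intro s' hs' heq
      have hs'2 : (s':ℤ) ≤ (k:ℤ) := by exact_mod_cast hs'
      -- (s'+s)(t+1) = m + k ; m ≤ ts ; kt < m : contradiction
      have e1 : (s':ℤ)*(t+1) + (s:ℤ)*(t+1) = m + k := by linarith
      have e2 : (0:ℤ) ≤ (s':ℤ)*(t+1) := by positivity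
      -- s(t+1) = st + s ≥ m + s ⇒ s' (t+1) ≤ k - s ⇒ s ≤ k
      have e3 : (s:ℤ) ≤ (k:ℤ) := by nlinarith
      have e4 : (s:ℤ)*t ≤ (k:ℤ)*t :=
        mul_le_mul_of_nonneg_right e3 (by positivity)
      nlinarith)]
    norm_num

lemma main2 (k : ℕ) (hk : 1 ≤ k) : Lfun t (T (k*t) * X ^ k) = t + 1 := by
  rw [fval_eq t ht T hTinit hTt1 hTrec]
  have h1 : (u t ^ k).coeff ((k*t : ℕ) : ℤ) = 1 := by
    rw [u_pow_apply_eq t k k le_rfl _ (by push_cast; ring)]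
    simp
  rw [h1]
  have h2 : (∑ s ∈ Finset.range (k*t+2),
      (A t s (k*t) : ℚ) * (u t ^ k).coeff (((k*t:ℕ) : ℤ) - (s:ℤ)*(t+1))) = t := by
    rw [Finset.sum_eq_single k]
    · rw [A_eq_t t ht k (k*t) (by omega) (by ring)]
      rw [u_pow_apply_eq t k 0 (by omega) _ (by push_cast; ring)]
      simp
    · intro s _ hne
      by_cases hA : A t s (k*t) = 0
      · rw [hA]; norm_num
      · have hst : k*t ≤ t * s := by
          by_contra hc
          exact hA (A_eq_zero_of_big t s (k*t) (by omega))
        have hst' : ((k*t:ℕ) : ℤ) ≤ (t:ℤ) * s := by exact_mod_cast hst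
        push_cast at hst'
        rw [u_pow_apply_zero t k _ (by
          intro s' hs' heq
          have hs'2 : (s':ℤ) ≤ (k:ℤ) := by exact_mod_cast hs'
          push_cast at heq
          -- (s'+s)(t+1) = kt + k = k(t+1) ⇒ s'+s = k; kt ≤ ts ⇒ k ≤ s ⇒ s = k
          have e1 : ((s':ℤ) + s)*(t+1) = (k:ℤ)*(t+1) := by ring_nf; ring_nf at heq; linarith
          have e2 : (s':ℤ) + s = k :=
            mul_right_cancel₀ (by positivity : ((t:ℤ)+1) ≠ 0) e1
          have e3 : (k:ℤ) ≤ s := by nlinarith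
          have : (s:ℤ) = k := by linarith
          exact hne (by exact_mod_cast this)) ]
        norm_num
    · intro hk2
      simp only [Finset.mem_range] at hk2
      have : k ≤ k * t := Nat.le_mul_of_pos_right k (by omega)
      omega
  rw [h2]
  ring


include ht hTinit hTt1 hTrec in
lemma T_deg : ∀ n, (T n).natDegree ≤ n ∧ (T n).coeff n = 1 := by
  intro n
  induction n using Nat.strong_induction_on with
  | _ n IH =>
  rcases le_or_gt n t with hn | hn
  · rw [hTinit n hn]
    constructor
    · exact (natDegree_X_pow_le n)
    · simp
  · rcases Nat.lt_or_ge n (t+2) with hn2 | hn2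
    · have hnx : n = t + 1 := by omega
      subst hnx
      rw [hTt1]
      have hconst : ((t : Polynomial ℚ) + 1) = ((t+1 : ℕ) : Polynomial ℚ) := by push_cast; ring
      constructor
      · refine (natDegree_sub_le _ _).trans (max_le ?_ ?_)
        · simp
        · rw [hconst, Polynomial.natDegree_natCast]; omega
      · rw [coeff_sub, coeff_X_pow, if_pos rfl, hconst, Polynomial.coeff_natCast_ite]
        simp
    · obtain ⟨m, rfl⟩ : ∃ m, n = m + 1 := ⟨n - 1, by omega⟩
      have hm : t < m := by omega
      obtain ⟨hd1, hc1⟩ := IH m (by omega)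
      obtain ⟨hd2, hc2⟩ := IH (m - t) (by omega)
      rw [hTrec m hm]
      constructor
      · refine (natDegree_sub_le _ _).trans ?_
        refine max_le ?_ ?_
        · have h3 := Polynomial.natDegree_mul_le (p := (X : Polynomial ℚ)) (q := T m)
          have h4 : (X : Polynomial ℚ).natDegree ≤ 1 := Polynomial.natDegree_X_le
          omega
        · omega
      · rw [coeff_sub, coeff_X_mul, hc1,
          coeff_eq_zero_of_natDegree_lt (lt_of_le_of_lt hd2 (by omega))]
        ring

omit ht hTinit hTt1 hTrec in
lemma Lfun_mul_expand (p q : Polynomial ℚ) :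
    Lfun t (p * q) = ∑ k ∈ q.support, q.coeff k * Lfun t (p * X ^ k) := by
  rw [Lfun_eq, map_mul]
  have hq : (Polynomial.aeval (u t)) q
      = ∑ k ∈ q.support, algebraMap ℚ (LaurentPolynomial ℚ) (q.coeff k) * u t ^ k := by
    rw [Polynomial.aeval_def, Polynomial.eval₂_eq_sum, Polynomial.sum_def]
  rw [hq, Finset.mul_sum, AddMonoidAlgebra.coeff_sum, Finset.sum_apply']
  refine Finset.sum_congr rfl fun k _ => ?_
  rw [← Algebra.smul_def, mul_smul_comm, apply_smul]
  congr 1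
  rw [Lfun_eq, map_mul, map_pow, aeval_X]


end Main
end ChebAux

open ChebAux in
theorem chebyshev1_higher_order_t_orthogonality (t : ℕ) (ht : 1 ≤ t)
    (T : ℕ → Polynomial ℚ)
    (hTinit : ∀ i ≤ t, T i = X ^ i)
    (hTt1 : T (t + 1) = X ^ (t + 1) - ((t : Polynomial ℚ) + 1))
    (hTrec : ∀ n, t < n → T (n + 1) = X * T n - T (n - t)) :
    (∀ m n : ℕ, n * t < m → Lfun t (T m * T n) = 0) ∧
    (∀ n : ℕ, 1 ≤ n → Lfun t (T (n * t) * T n) = t + 1) := by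
  have hdeg := T_deg t ht T hTinit hTt1 hTrec
  constructor
  · intro m n h
    rw [Lfun_mul_expand t]
    refine Finset.sum_eq_zero fun k hk => ?_
    have hk1 : k ≤ n := le_trans (Polynomial.le_natDegree_of_mem_supp k hk) (hdeg n).1
    rw [main1 t ht T hTinit hTt1 hTrec m k (by nlinarith)]
    ring
  · intro n hn
    rw [Lfun_mul_expand t]
    rw [Finset.sum_eq_single n]
    · rw [(hdeg n).2, main2 t ht T hTinit hTt1 hTrec n hn, one_mul]
    · intro k hk hne
      have hk1 : k ≤ n := le_trans (Polynomial.le_natDegree_of_mem_supp k hk) (hdeg n).1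
      have hklt : k < n := by omega
      rw [main1 t ht T hTinit hTt1 hTrec (n*t) k (by
        have : k * t < n * t := Nat.mul_lt_mul_of_lt_of_le hklt le_rfl (by omega)
        omega)]
      ring
    · intro hns
      rw [Polynomial.notMem_support_iff.mp hns]
      ring
end

section
/- The higher-order Hermite polynomials, defined as the matching-by-t-paths polynomials of complete graphs, satisfy the recurrence H^{(t)}_{n+1}(x) = x H^{(t)}_n(x) - binomial(n,t) ((t+1)!/2) H^{(t)}_{n-t}(x) for n > 0, with H^{(t)}_0 = 1 and polynomials of negative index zero. -/
open Polynomial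
open scoped Classical

/-- The edge set of the path visiting the vertices of `l` in order. -/
def pathEdges (l : List ℕ) : Finset (Sym2 ℕ) :=
  ((l.zip l.tail).map fun p => s(p.1, p.2)).toFinset

/-- `E` is the edge set of a path with `t` edges on `t+1` distinct vertices,
all among `0,…,n-1`. -/
def IsTPathOn (t n : ℕ) (E : Finset (Sym2 ℕ)) : Prop :=
  ∃ l : List ℕ, l.Nodup ∧ l.length = t + 1 ∧ (∀ v ∈ l, v < n) ∧ E = pathEdges l

/-- `v` is a vertex of the edge set `E`. -/
def vmem (v : ℕ) (E : Finset (Sym2 ℕ)) : Prop := ∃ e ∈ E, v ∈ e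

/-- Coverings of the complete graph `K_n` by vertex-disjoint `t`-edge paths,
encoded as sets of edge sets of the covering paths. -/
def KnCoverings (t n : ℕ) : Set (Finset (Finset (Sym2 ℕ))) :=
  {C | (∀ E ∈ C, IsTPathOn t n E) ∧
       ∀ E ∈ C, ∀ E' ∈ C, E ≠ E' → ∀ v, vmem v E → ¬ vmem v E'}

/-- The higher-order Hermite polynomial: the matching-by-`t`-paths polynomial of
`K_n`, each path getting weight `-1` and each uncovered vertex weight `x`. -/
noncomputable def Hcomb (t n : ℕ) : Polynomial ℤ :=
  ∑ᶠ C ∈ KnCoverings t n, (-1 : Polynomial ℤ) ^ C.card * X ^ (n - (t + 1) * C.card)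

lemma pathEdges_nil : pathEdges [] = ∅ := rfl

lemma pathEdges_singleton (a : ℕ) : pathEdges [a] = ∅ := rfl

lemma pathEdges_cons_cons (a b : ℕ) (r : List ℕ) :
    pathEdges (a :: b :: r) = insert s(a, b) (pathEdges (b :: r)) := by
  simp [pathEdges, List.toFinset_cons]

lemma mem_of_mem_pathEdges {e : Sym2 ℕ} {l : List ℕ} (he : e ∈ pathEdges l) {v : ℕ}
    (hv : v ∈ e) : v ∈ l := by
  simp only [pathEdges, List.mem_toFinset, List.mem_map] at he
  obtain ⟨p, hp, rfl⟩ := he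
  have h1 := List.of_mem_zip hp
  rcases Sym2.mem_iff.1 hv with rfl | rfl
  · exact h1.1
  · exact List.mem_of_mem_tail h1.2

lemma vmem_pathEdges {l : List ℕ} (h : 2 ≤ l.length) {v : ℕ} :
    vmem v (pathEdges l) ↔ v ∈ l := by
  constructor
  · rintro ⟨e, he, hv⟩; exact mem_of_mem_pathEdges he hv
  · intro hv
    induction l with
    | nil => simp at hv
    | cons a r ih =>
      match r, hv with
      | b :: r, hv =>
        rw [pathEdges_cons_cons]
        rcases List.mem_cons.1 hv with rfl | hv
        · exact ⟨s(v, b), Finset.mem_insert_self _ _, by simp⟩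
        · rcases List.mem_cons.1 hv with rfl | hv'
          · exact ⟨s(a, v), Finset.mem_insert_self _ _, by simp⟩
          · have h2 : 2 ≤ (b :: r).length := by
              simp; have := List.length_pos_iff.2 (List.ne_nil_of_mem hv')
              omega
            obtain ⟨e, he, hve⟩ := ih h2 hv
            exact ⟨e, Finset.mem_insert_of_mem he, hve⟩

lemma not_mem_pathEdges_of_not_mem {l : List ℕ} {a : ℕ} (ha : a ∉ l) {e : Sym2 ℕ}
    (hae : a ∈ e) : e ∉ pathEdges l := fun he => ha (mem_of_mem_pathEdges he hae)

lemma card_pathEdges {l : List ℕ} (hl : l.Nodup) : (pathEdges l).card = l.length - 1 := by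
  induction l with
  | nil => simp [pathEdges_nil]
  | cons a r ih =>
    match r with
    | [] => simp [pathEdges_singleton]
    | b :: r =>
      rw [pathEdges_cons_cons]
      have ha : a ∉ (b :: r) := (List.nodup_cons.1 hl).1
      have : s(a, b) ∉ pathEdges (b :: r) :=
        not_mem_pathEdges_of_not_mem ha (by simp)
      rw [Finset.card_insert_of_notMem this, ih (hl.of_cons)]
      simp

lemma pathEdges_append_singleton {l : List ℕ} (h : l ≠ []) (b : ℕ) :
    pathEdges (l ++ [b]) = insert s(l.getLast h, b) (pathEdges l) := by
  induction l with
  | nil => simp at h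
  | cons a r ih =>
    match r with
    | [] => simp [pathEdges_cons_cons, pathEdges]
    | c :: r =>
      have h1 : (a :: c :: r) ++ [b] = a :: c :: (r ++ [b]) := by simp
      have h2 : c :: (r ++ [b]) = (c :: r) ++ [b] := by simp
      rw [h1, pathEdges_cons_cons, h2, ih (by simp), pathEdges_cons_cons,
        show (a :: c :: r).getLast h = (c :: r).getLast (by simp) from List.getLast_cons _]
      exact Finset.insert_comm _ _ _

lemma pathEdges_reverse (l : List ℕ) : pathEdges l.reverse = pathEdges l := by
  induction l with
  | nil => rfl
  | cons a r ih =>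
    match r with
    | [] => rfl
    | c :: r =>
      rw [List.reverse_cons, pathEdges_append_singleton (by simp), ih,
        pathEdges_cons_cons]
      congr 1
      rw [List.getLast_reverse]
      · exact Sym2.eq_swap

lemma filter_head_pathEdges {a b : ℕ} {r : List ℕ} (h : a ∉ b :: r) :
    (pathEdges (a :: b :: r)).filter (a ∈ ·) = {s(a, b)} := by
  ext e
  simp only [pathEdges_cons_cons, Finset.mem_filter, Finset.mem_insert,
    Finset.mem_singleton]
  constructor
  · rintro ⟨he | he, hae⟩
    · exact he
    · exact absurd (mem_of_mem_pathEdges he hae) h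
  · rintro rfl; exact ⟨Or.inl rfl, by simp⟩

lemma adjacent_mem_pathEdges (x : List ℕ) (u v : ℕ) (y : List ℕ) :
    s(u, v) ∈ pathEdges (x ++ u :: v :: y) := by
  induction x with
  | nil => simp [pathEdges_cons_cons]
  | cons a x ih =>
    have : (a :: x) ++ u :: v :: y = a :: (x ++ u :: v :: y) := by simp
    rw [this]
    match hm : x ++ u :: v :: y, ih with
    | c :: m, ih =>
      rw [pathEdges_cons_cons]
      exact Finset.mem_insert_of_mem ih

lemma mid_two_edges {l : List ℕ} (hl : l.Nodup) (hne : l ≠ []) {v : ℕ} (hv : v ∈ l)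
    (hh : v ≠ l.head hne) (hlast : v ≠ l.getLast hne) :
    ∃ e₁ e₂, e₁ ∈ pathEdges l ∧ e₂ ∈ pathEdges l ∧ e₁ ≠ e₂ ∧ v ∈ e₁ ∧ v ∈ e₂ := by
  obtain ⟨l₁, l₂, rfl⟩ := List.mem_iff_append.1 hv
  have hl₁ : l₁ ≠ [] := by
    rintro rfl; exact hh (by simp)
  have hl₂ : l₂ ≠ [] := by
    rintro rfl; exact hlast (by simp [List.getLast_append])
  obtain ⟨w, l₂', rfl⟩ := List.exists_cons_of_ne_nil hl₂
  obtain ⟨s', u, rfl⟩ : ∃ s' u, l₁ = s' ++ [u] := by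
    rcases List.eq_nil_or_concat l₁ with rfl | ⟨L, b, rfl⟩
    · exact absurd rfl hl₁
    · exact ⟨L, b, List.concat_eq_append⟩
  refine ⟨s(u, v), s(v, w), ?_, ?_, ?_, by simp, by simp⟩
  · have : (s' ++ [u]) ++ v :: w :: l₂' = s' ++ u :: v :: (w :: l₂') := by simp
    rw [this]; exact adjacent_mem_pathEdges _ _ _ _
  · exact adjacent_mem_pathEdges _ _ _ _
  · intro hEq
    have hd := hl; rw [List.nodup_append] at hd
    have huv : u ≠ v := fun h' => hd.2.2 u (show u ∈ s' ++ [u] by simp) u (by simp [h']) rfl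
    have huw : u ≠ w := fun h' => hd.2.2 u (show u ∈ s' ++ [u] by simp) u (by simp [h']) rfl
    rw [Sym2.eq_iff] at hEq
    rcases hEq with ⟨h1, h2⟩ | ⟨h1, h2⟩
    · exact huv h1
    · exact huw h1


lemma pathEdges_eq_of_head_eq : ∀ (l l' : List ℕ), l.Nodup → l'.Nodup →
    2 ≤ l.length → l'.length = l.length → pathEdges l = pathEdges l' →
    l.head? = l'.head? → l = l' := by
  intro l
  induction l with
  | nil => intro l' _ _ h2; simp at h2
  | cons a r ih =>
    intro l' hl hl' h2 hlen hE hh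
    match r, l', hlen with
    | b :: r2, a' :: b' :: l'', hlen =>
      obtain rfl : a' = a := by
        simp only [List.head?_cons] at hh; exact (Option.some_inj.1 hh).symm
      have hanb : a' ∉ b :: r2 := (List.nodup_cons.1 hl).1
      have hanb' : a' ∉ b' :: l'' := (List.nodup_cons.1 hl').1
      have hfil : ({s(a', b)} : Finset (Sym2 ℕ)) = {s(a', b')} := by
        rw [← filter_head_pathEdges hanb, ← filter_head_pathEdges hanb', hE]
      have hbb : b = b' := by
        have := Finset.singleton_inj.1 hfil
        rw [Sym2.eq_iff] at this
        rcases this with ⟨-, h⟩ | ⟨h1, h2⟩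
        · exact h
        · exact absurd (h1 ▸ List.mem_cons_self (a := b') (l := l'')) (h1 ▸ hanb')
      subst hbb
      have htE : pathEdges (b :: r2) = pathEdges (b :: l'') := by
        have h1 : s(a', b) ∉ pathEdges (b :: r2) :=
          not_mem_pathEdges_of_not_mem hanb (by simp)
        have h2 : s(a', b) ∉ pathEdges (b :: l'') :=
          not_mem_pathEdges_of_not_mem hanb' (by simp)
        have hins := hE
        rw [pathEdges_cons_cons, pathEdges_cons_cons] at hins
        rw [← Finset.erase_insert h1, ← Finset.erase_insert h2, hins]
      match r2, l'', hlen with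
      | [], [], _ => rfl
      | [], c :: l'', hlen => simp at hlen
      | c :: r2, [], hlen => simp at hlen
      | c :: r2, d :: l'', hlen =>
        have := ih (b :: d :: l'') (List.nodup_cons.1 hl).2 (List.nodup_cons.1 hl').2
          (by simp) (by simpa using hlen) htE rfl
        rw [this]

lemma pathEdges_eq_cases {l l' : List ℕ} (hl : l.Nodup) (hl' : l'.Nodup)
    (h2 : 2 ≤ l.length) (hlen : l'.length = l.length)
    (hE : pathEdges l = pathEdges l') : l' = l ∨ l' = l.reverse := by
  obtain ⟨a, b, r, rfl⟩ : ∃ a b r, l = a :: b :: r := by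
    match l, h2 with
    | x :: y :: r, _ => exact ⟨x, y, r, rfl⟩
  have hne' : l' ≠ [] := by rintro rfl; simp at hlen
  have h2' : 2 ≤ l'.length := by rw [hlen]; exact h2
  have hal' : a ∈ l' := by
    rw [← vmem_pathEdges h2', ← hE, vmem_pathEdges h2]; simp
  have hanb : a ∉ b :: r := (List.nodup_cons.1 hl).1
  have hfil := filter_head_pathEdges hanb
  have hend : a = l'.head hne' ∨ a = l'.getLast hne' := by
    by_contra hcon
    push_neg at hcon
    obtain ⟨e₁, e₂, he₁, he₂, hne12, hv1, hv2⟩ :=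
      mid_two_edges hl' hne' hal' hcon.1 hcon.2
    rw [← hE] at he₁ he₂
    have m1 : e₁ ∈ (pathEdges (a :: b :: r)).filter (a ∈ ·) := Finset.mem_filter.2 ⟨he₁, hv1⟩
    have m2 : e₂ ∈ (pathEdges (a :: b :: r)).filter (a ∈ ·) := Finset.mem_filter.2 ⟨he₂, hv2⟩
    rw [hfil, Finset.mem_singleton] at m1 m2
    exact hne12 (m1.trans m2.symm)
  rcases hend with hh | hh
  · left
    exact (pathEdges_eq_of_head_eq _ l' hl hl' h2 hlen hE
      (by rw [List.head?_eq_head hne', ← hh]; rfl)).symm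
  · right
    have hrev : a :: b :: r = l'.reverse := by
      refine pathEdges_eq_of_head_eq _ l'.reverse hl (List.nodup_reverse.2 hl') h2
        (by simp [hlen]) (by rw [hE, pathEdges_reverse]) ?_
      rw [List.head?_reverse, List.getLast?_eq_getLast hne', ← hh]; rfl
    rw [hrev, List.reverse_reverse]

def sym2Finset (e : Sym2 ℕ) : Finset ℕ :=
  Sym2.lift ⟨fun a b => {a, b}, fun a b => Finset.pair_comm a b⟩ e

lemma mem_sym2Finset {v : ℕ} {e : Sym2 ℕ} : v ∈ sym2Finset e ↔ v ∈ e := by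
  induction e with
  | _ a b => simp [sym2Finset, Sym2.mem_iff]

def vsetF (E : Finset (Sym2 ℕ)) : Finset ℕ := E.biUnion sym2Finset

lemma mem_vsetF {v : ℕ} {E : Finset (Sym2 ℕ)} : v ∈ vsetF E ↔ vmem v E := by
  simp [vsetF, vmem, mem_sym2Finset]

lemma vsetF_pathEdges {l : List ℕ} (h2 : 2 ≤ l.length) :
    vsetF (pathEdges l) = l.toFinset := by
  ext v
  rw [mem_vsetF, vmem_pathEdges h2, List.mem_toFinset]

/-- Coverings of the complete graph on vertex set `V` by `t`-edge paths. -/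
def CovOn (t : ℕ) (V : Finset ℕ) : Set (Finset (Finset (Sym2 ℕ))) :=
  {C | (∀ E ∈ C, ∃ l : List ℕ, l.Nodup ∧ l.length = t + 1 ∧ (∀ v ∈ l, v ∈ V) ∧ E = pathEdges l) ∧
       ∀ E ∈ C, ∀ E' ∈ C, E ≠ E' → ∀ v, vmem v E → ¬ vmem v E'}

lemma knCoverings_eq (t n : ℕ) : KnCoverings t n = CovOn t (Finset.range n) := by
  ext C
  unfold KnCoverings CovOn IsTPathOn
  simp [Finset.mem_range]

lemma covOn_finite (t : ℕ) (V : Finset ℕ) : (CovOn t V).Finite := by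
  classical
  apply Set.Finite.subset (Set.finite_range
    (fun C : {D // D ∈ ((V.sym2).powerset.powerset)} => (C : Finset (Finset (Sym2 ℕ)))))
  rintro C ⟨h1, -⟩
  refine ⟨⟨C, ?_⟩, rfl⟩
  simp only [Finset.mem_powerset]
  intro E hE
  simp only [Finset.mem_powerset]
  obtain ⟨l, hnd, hlen, hmem, rfl⟩ := h1 E hE
  intro e he
  rw [Finset.mem_sym2_iff] -- check name
  intro v hv
  exact hmem v (mem_of_mem_pathEdges he hv)

noncomputable def covFinset (t : ℕ) (V : Finset ℕ) : Finset (Finset (Finset (Sym2 ℕ))) :=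
  (covOn_finite t V).toFinset

lemma mem_covFinset {t : ℕ} {V : Finset ℕ} {C : Finset (Finset (Sym2 ℕ))} :
    C ∈ covFinset t V ↔ C ∈ CovOn t V := Set.Finite.mem_toFinset _

noncomputable def Pgen (t : ℕ) (V : Finset ℕ) : Polynomial ℤ :=
  ∑ C ∈ covFinset t V, (-1 : Polynomial ℤ) ^ C.card * X ^ (V.card - (t + 1) * C.card)

lemma coe_covFinset (t : ℕ) (V : Finset ℕ) : (covFinset t V : Set (Finset (Finset (Sym2 ℕ)))) = CovOn t V := by
  ext C; rw [Finset.mem_coe, mem_covFinset]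

lemma Hcomb_eq_Pgen (t n : ℕ) : Hcomb t n = Pgen t (Finset.range n) := by
  rw [Hcomb, Pgen, knCoverings_eq, ← coe_covFinset, finsum_mem_coe_finset]
  exact Finset.sum_congr rfl fun C _ => by rw [Finset.card_range]

lemma card_vsetF {t : ℕ} (ht : 1 ≤ t) {V : Finset ℕ} {C : Finset (Finset (Sym2 ℕ))}
    (hC : C ∈ CovOn t V) {E : Finset (Sym2 ℕ)} (hE : E ∈ C) :
    (vsetF E).card = t + 1 ∧ vsetF E ⊆ V := by
  obtain ⟨l, hnd, hlen, hmem, rfl⟩ := hC.1 E hE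
  have h2 : 2 ≤ l.length := by omega
  rw [vsetF_pathEdges h2]
  constructor
  · rw [List.toFinset_card_of_nodup hnd, hlen]
  · intro v hv; exact hmem v (List.mem_toFinset.1 hv)

lemma card_cov_le {t : ℕ} (ht : 1 ≤ t) {V : Finset ℕ} {C : Finset (Finset (Sym2 ℕ))}
    (hC : C ∈ CovOn t V) : (t + 1) * C.card ≤ V.card := by
  have hdisj : ∀ E ∈ C, ∀ E' ∈ C, E ≠ E' → Disjoint (vsetF E) (vsetF E') := by
    intro E hE E' hE' hne
    rw [Finset.disjoint_left]
    intro v hv hv'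
    exact hC.2 E hE E' hE' hne v (mem_vsetF.1 hv) (mem_vsetF.1 hv')
  have hsub : C.biUnion vsetF ⊆ V := by
    intro v hv
    obtain ⟨E, hE, hvE⟩ := Finset.mem_biUnion.1 hv
    exact (card_vsetF ht hC hE).2 hvE
  calc (t + 1) * C.card = ∑ E ∈ C, (vsetF E).card := by
        rw [Finset.sum_congr rfl fun E hE => (card_vsetF ht hC hE).1]
        simp [mul_comm]
      _ = (C.biUnion vsetF).card := (Finset.card_biUnion hdisj).symm
      _ ≤ V.card := Finset.card_le_card hsub

lemma pathEdges_map (g : ℕ → ℕ) (l : List ℕ) :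
    pathEdges (l.map g) = (pathEdges l).image (Sym2.map g) := by
  have hz : (l.map g).zip (l.map g).tail = (l.zip l.tail).map (Prod.map g g) := by
    rw [← List.map_tail, List.zip_map]
  ext e
  simp only [pathEdges, hz, List.mem_toFinset, List.mem_map, Finset.mem_image]
  constructor
  · rintro ⟨p, hp, rfl⟩
    obtain ⟨q, hq, rfl⟩ := hp
    exact ⟨s(q.1, q.2), ⟨q, hq, rfl⟩, by cases q; simp [Sym2.map_pair_eq, Prod.map]⟩
  · rintro ⟨a, ⟨q, hq, rfl⟩, rfl⟩
    exact ⟨Prod.map g g q, ⟨q, hq, rfl⟩, by cases q; simp [Sym2.map_pair_eq, Prod.map]⟩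

lemma sym2_map_id_on {f : ℕ → ℕ} {e : Sym2 ℕ} (h : ∀ v ∈ e, f v = v) :
    Sym2.map f e = e := by
  induction e with
  | _ a b => rw [Sym2.map_pair_eq, h a (by simp), h b (by simp)]

lemma image_image_id_on {g g' : ℕ → ℕ} {V : Finset ℕ}
    (hinv : ∀ v ∈ V, g' (g v) = v) {E : Finset (Sym2 ℕ)}
    (hE : ∀ e ∈ E, ∀ v ∈ e, v ∈ V) :
    (E.image (Sym2.map g)).image (Sym2.map g') = E := by
  rw [Finset.image_image]
  have : ∀ e ∈ E, (Sym2.map g' ∘ Sym2.map g) e = e := by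
    intro e he
    show Sym2.map g' (Sym2.map g e) = e
    rw [Sym2.map_map]
    exact sym2_map_id_on fun v hv => hinv v (hE e he v hv)
  calc E.image (Sym2.map g' ∘ Sym2.map g) = E.image id := Finset.image_congr
        (fun e he => this e (Finset.mem_coe.1 he))
    _ = E := Finset.image_id

lemma covOn_map {t : ℕ} (ht : 1 ≤ t) {V W : Finset ℕ} {g g' : ℕ → ℕ}
    (hgW : ∀ v ∈ V, g v ∈ W) (hinv : ∀ v ∈ V, g' (g v) = v)
    {C : Finset (Finset (Sym2 ℕ))} (hC : C ∈ CovOn t V) :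
    C.image (fun E => E.image (Sym2.map g)) ∈ CovOn t W ∧
    (C.image (fun E => E.image (Sym2.map g))).image (fun E => E.image (Sym2.map g')) = C ∧
    (C.image (fun E => E.image (Sym2.map g))).card = C.card := by
  have hEdata : ∀ E ∈ C, ∃ l : List ℕ, l.Nodup ∧ l.length = t + 1 ∧
      (∀ v ∈ l, v ∈ V) ∧ E = pathEdges l := hC.1
  have hEdges : ∀ E ∈ C, ∀ e ∈ E, ∀ v ∈ e, v ∈ V := by
    intro E hE e he v hv
    obtain ⟨l, hnd, hlen, hmem, rfl⟩ := hEdata E hE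
    exact hmem v (mem_of_mem_pathEdges he hv)
  have hid : ∀ E ∈ C, (E.image (Sym2.map g)).image (Sym2.map g') = E :=
    fun E hE => image_image_id_on hinv (hEdges E hE)
  have hinjE : ∀ E ∈ C, ∀ E' ∈ C,
      E.image (Sym2.map g) = E'.image (Sym2.map g) → E = E' := by
    intro E hE E' hE' h
    rw [← hid E hE, ← hid E' hE', h]
  refine ⟨⟨?_, ?_⟩, ?_, ?_⟩
  · intro D hD
    obtain ⟨E, hE, rfl⟩ := Finset.mem_image.1 hD
    obtain ⟨l, hnd, hlen, hmem, rfl⟩ := hEdata E hE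
    refine ⟨l.map g, ?_, by simp [hlen], ?_, (pathEdges_map g l).symm⟩
    · refine List.Nodup.map_on (fun x hx y hy hxy => ?_) hnd
      rw [← hinv x (hmem x hx), ← hinv y (hmem y hy), hxy]
    · intro v hv
      obtain ⟨u, hu, rfl⟩ := List.mem_map.1 hv
      exact hgW u (hmem u hu)
  · intro D hD D' hD' hne v hvD hvD'
    obtain ⟨E, hE, rfl⟩ := Finset.mem_image.1 hD
    obtain ⟨E', hE', rfl⟩ := Finset.mem_image.1 hD'
    obtain ⟨l, hnd, hlen, hmem, rfl⟩ := hEdata E hE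
    obtain ⟨l', hnd', hlen', hmem', rfl⟩ := hEdata E' hE'
    have h2 : 2 ≤ l.length := by omega
    have h2' : 2 ≤ l'.length := by omega
    rw [← pathEdges_map, vmem_pathEdges (by simp [hlen]; omega)] at hvD
    rw [← pathEdges_map, vmem_pathEdges (by simp [hlen']; omega)] at hvD'
    obtain ⟨u, hu, rfl⟩ := List.mem_map.1 hvD
    obtain ⟨u', hu', huu⟩ := List.mem_map.1 hvD'
    have : u' = u := by
      rw [← hinv u' (hmem' u' hu'), huu, hinv u (hmem u hu)]
    rw [this] at hu'
    have hEne : pathEdges l ≠ pathEdges l' := fun h => hne (by rw [h])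
    exact hC.2 _ hE _ hE' hEne u ((vmem_pathEdges h2).2 hu)
      ((vmem_pathEdges h2').2 hu')
  · rw [Finset.image_image]
    calc C.image _ = C.image id := Finset.image_congr
          (fun E hE => hid E (Finset.mem_coe.1 hE))
      _ = C := Finset.image_id
  · exact Finset.card_image_of_injOn fun E hE E' hE' h =>
      hinjE E (Finset.mem_coe.1 hE) E' (Finset.mem_coe.1 hE') h

lemma Pgen_congr {t : ℕ} (ht : 1 ≤ t) {V W : Finset ℕ} (h : V.card = W.card) :
    Pgen t V = Pgen t W := by
  classical
  set e := Finset.equivOfCardEq h with he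
  set g : ℕ → ℕ := fun v => if hv : v ∈ V then (e ⟨v, hv⟩ : ℕ) else v with hg
  set g' : ℕ → ℕ := fun w => if hw : w ∈ W then (e.symm ⟨w, hw⟩ : ℕ) else w with hg'
  have hgW : ∀ v ∈ V, g v ∈ W := fun v hv => by
    simp only [hg, dif_pos hv]; exact (e ⟨v, hv⟩).2
  have hg'V : ∀ w ∈ W, g' w ∈ V := fun w hw => by
    simp only [hg', dif_pos hw]; exact (e.symm ⟨w, hw⟩).2
  have hinv : ∀ v ∈ V, g' (g v) = v := fun v hv => by
    simp only [hg, hg', dif_pos hv, dif_pos (e ⟨v, hv⟩).2]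
    rw [show (⟨(e ⟨v, hv⟩ : ℕ), _⟩ : {x // x ∈ W}) = e ⟨v, hv⟩ from rfl, Equiv.symm_apply_apply]
  have hinv' : ∀ w ∈ W, g (g' w) = w := fun w hw => by
    simp only [hg, hg', dif_pos hw, dif_pos (e.symm ⟨w, hw⟩).2]
    rw [show (⟨(e.symm ⟨w, hw⟩ : ℕ), _⟩ : {x // x ∈ V}) = e.symm ⟨w, hw⟩ from rfl,
      Equiv.apply_symm_apply]
  unfold Pgen
  refine Finset.sum_nbij' (i := fun C => C.image (fun E => E.image (Sym2.map g)))
    (j := fun C => C.image (fun E => E.image (Sym2.map g'))) ?_ ?_ ?_ ?_ ?_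
  · intro C hC
    exact mem_covFinset.2 (covOn_map ht hgW hinv (mem_covFinset.1 hC)).1
  · intro C hC
    exact mem_covFinset.2 (covOn_map ht hg'V hinv' (mem_covFinset.1 hC)).1
  · intro C hC
    exact (covOn_map ht hgW hinv (mem_covFinset.1 hC)).2.1
  · intro C hC
    exact (covOn_map ht hg'V hinv' (mem_covFinset.1 hC)).2.1
  · intro C hC
    rw [(covOn_map ht hgW hinv (mem_covFinset.1 hC)).2.2, h]

noncomputable def pathsOn (S : Finset ℕ) : Finset (Finset (Sym2 ℕ)) :=
  S.toList.permutations.toFinset.image pathEdges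

lemma perm_toList_iff {S : Finset ℕ} {l : List ℕ} :
    l.Perm S.toList ↔ l.Nodup ∧ l.toFinset = S := by
  constructor
  · intro h
    refine ⟨h.nodup_iff.2 S.nodup_toList, ?_⟩
    rw [List.toFinset_eq_iff_perm_dedup.2 (h.dedup), Finset.toList_toFinset]  -- fix
    -- fallback
  · rintro ⟨hnd, rfl⟩
    have h1 : l.toFinset.toList.Nodup := Finset.nodup_toList _
    have : l.toFinset.toList.toFinset = l.toFinset := Finset.toList_toFinset _
    rw [List.toFinset_eq_iff_perm_dedup] at this
    rw [List.Nodup.dedup h1, List.Nodup.dedup hnd] at this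
    exact this.symm

lemma mem_pathsOn {S : Finset ℕ} {F : Finset (Sym2 ℕ)} :
    F ∈ pathsOn S ↔ ∃ l : List ℕ, l.Nodup ∧ l.toFinset = S ∧ F = pathEdges l := by
  unfold pathsOn
  simp only [Finset.mem_image, List.mem_toFinset, List.mem_permutations]
  constructor
  · rintro ⟨l, hl, rfl⟩
    obtain ⟨h1, h2⟩ := perm_toList_iff.1 hl
    exact ⟨l, h1, h2, rfl⟩
  · rintro ⟨l, h1, h2, rfl⟩
    exact ⟨l, perm_toList_iff.2 ⟨h1, h2⟩, rfl⟩

lemma length_of_nodup_toFinset {S : Finset ℕ} {l : List ℕ} (hnd : l.Nodup)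
    (h : l.toFinset = S) : l.length = S.card := by
  rw [← h, List.toFinset_card_of_nodup hnd]

lemma vsetF_of_mem_pathsOn {t : ℕ} (ht : 1 ≤ t) {S : Finset ℕ} (hS : S.card = t + 1)
    {F : Finset (Sym2 ℕ)} (hF : F ∈ pathsOn S) : vsetF F = S := by
  obtain ⟨l, hnd, hl, rfl⟩ := mem_pathsOn.1 hF
  have := length_of_nodup_toFinset hnd hl
  rw [vsetF_pathEdges (by omega), hl]

lemma card_pathsOn {t : ℕ} (ht : 1 ≤ t) {S : Finset ℕ} (hS : S.card = t + 1) :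
    (pathsOn S).card * 2 = (t + 1).factorial := by
  classical
  set L := S.toList.permutations.toFinset with hL
  have hmemL : ∀ l, l ∈ L ↔ (l.Nodup ∧ l.toFinset = S) := by
    intro l
    rw [hL, List.mem_toFinset, List.mem_permutations, perm_toList_iff]
  have hLcard : L.card = (t + 1).factorial := by
    rw [hL, List.toFinset_card_of_nodup (List.nodup_permutations _ S.nodup_toList),
      List.length_permutations, Finset.length_toList, hS]
  have hmaps : ∀ l ∈ L, pathEdges l ∈ pathsOn S := by
    intro l hl
    rw [hmemL] at hl
    exact mem_pathsOn.2 ⟨l, hl.1, hl.2, rfl⟩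
  have hfib : ∀ F ∈ pathsOn S, (L.filter (fun l => pathEdges l = F)).card = 2 := by
    intro F hF
    obtain ⟨l0, hnd0, hS0, rfl⟩ := mem_pathsOn.1 hF
    have hlen0 : l0.length = t + 1 := (length_of_nodup_toFinset hnd0 hS0).trans hS
    have h20 : 2 ≤ l0.length := by omega
    have hrevne : l0.reverse ≠ l0 := by
      intro hrev
      match l0, h20, hnd0, hrev with
      | a :: b :: r, _, hnd0, hrev =>
        have hlast : (a :: b :: r).getLast (by simp) = a := by
          rw [← List.head_reverse (by simp)]
          simp only [hrev, List.head_cons]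
        have : (a :: b :: r).getLast (by simp) ∈ b :: r := by
          rw [List.getLast_cons (by simp)]
          exact List.getLast_mem _
        rw [hlast] at this
        exact (List.nodup_cons.1 hnd0).1 this
    have : L.filter (fun l => pathEdges l = pathEdges l0) = {l0, l0.reverse} := by
      ext l
      simp only [Finset.mem_filter, Finset.mem_insert, Finset.mem_singleton, hmemL]
      constructor
      · rintro ⟨⟨hnd, hSl⟩, hEq⟩
        have hlen : l.length = l0.length :=
          (length_of_nodup_toFinset hnd hSl).trans
            (length_of_nodup_toFinset hnd0 hS0).symm
        exact pathEdges_eq_cases hnd0 hnd h20 hlen hEq.symm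
      · rintro (rfl | rfl)
        · exact ⟨⟨hnd0, hS0⟩, rfl⟩
        · refine ⟨⟨List.nodup_reverse.2 hnd0, by rw [List.toFinset_reverse, hS0]⟩,
            pathEdges_reverse l0⟩
    rw [this, Finset.card_insert_of_notMem (by simp [Ne.symm hrevne]), Finset.card_singleton]
  calc (pathsOn S).card * 2 = ∑ F ∈ pathsOn S, (L.filter (fun l => pathEdges l = F)).card := by
        rw [Finset.sum_congr rfl hfib, Finset.sum_const, smul_eq_mul, mul_comm]
    _ = L.card := (Finset.card_eq_sum_card_fiberwise hmaps).symm
    _ = (t + 1).factorial := hLcard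

/-- (t+1)-subsets of range (n+1) containing n -/
noncomputable def topSets (t n : ℕ) : Finset (Finset ℕ) :=
  ((Finset.range n).powersetCard t).image (insert n)

lemma mem_topSets {t n : ℕ} {S : Finset ℕ} :
    S ∈ topSets t n ↔ S ⊆ Finset.range (n + 1) ∧ n ∈ S ∧ S.card = t + 1 := by
  unfold topSets
  simp only [Finset.mem_image, Finset.mem_powersetCard]
  constructor
  · rintro ⟨T, ⟨hT, hcard⟩, rfl⟩
    have hnT : n ∉ T := fun h => by simpa using Finset.mem_range.1 (hT h)
    refine ⟨?_, Finset.mem_insert_self _ _, by rw [Finset.card_insert_of_notMem hnT, hcard]⟩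
    intro v hv
    rcases Finset.mem_insert.1 hv with rfl | hv
    · exact Finset.self_mem_range_succ _
    · exact Finset.mem_range.2 (by have := Finset.mem_range.1 (hT hv); omega)
  · rintro ⟨hsub, hn, hcard⟩
    refine ⟨S.erase n, ⟨?_, ?_⟩, by rw [Finset.insert_erase hn]⟩
    · intro v hv
      have h1 := Finset.mem_range.1 (hsub (Finset.mem_of_mem_erase hv))
      have h2 := Finset.ne_of_mem_erase hv
      exact Finset.mem_range.2 (by omega)
    · rw [Finset.card_erase_of_mem hn, hcard]; rfl

lemma card_topSets (t n : ℕ) : (topSets t n).card = n.choose t := by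
  unfold topSets
  rw [Finset.card_image_of_injOn, Finset.card_powersetCard, Finset.card_range]
  intro T hT T' hT' h
  rw [Finset.mem_coe, Finset.mem_powersetCard] at hT hT'
  have hnT : n ∉ T := fun hc => by simpa using Finset.mem_range.1 (hT.1 hc)
  have hnT' : n ∉ T' := fun hc => by simpa using Finset.mem_range.1 (hT'.1 hc)
  rw [← Finset.erase_insert hnT, ← Finset.erase_insert hnT', h]

/-- edge sets of t-paths inside range (n+1) passing through n -/
noncomputable def topPaths (t n : ℕ) : Finset (Finset (Sym2 ℕ)) :=
  (topSets t n).biUnion pathsOn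

lemma mem_topPaths {t n : ℕ} (ht : 1 ≤ t) {F : Finset (Sym2 ℕ)} :
    F ∈ topPaths t n ↔ (∃ l : List ℕ, l.Nodup ∧ l.length = t + 1 ∧
      (∀ v ∈ l, v ∈ Finset.range (n + 1)) ∧ F = pathEdges l) ∧ vmem n F := by
  unfold topPaths
  simp only [Finset.mem_biUnion]
  constructor
  · rintro ⟨S, hS, hF⟩
    obtain ⟨hsub, hn, hcard⟩ := mem_topSets.1 hS
    obtain ⟨l, hnd, hlS, rfl⟩ := mem_pathsOn.1 hF
    have hlen : l.length = t + 1 := (length_of_nodup_toFinset hnd hlS).trans hcard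
    refine ⟨⟨l, hnd, hlen, ?_, rfl⟩, ?_⟩
    · intro v hv; exact hsub (hlS ▸ List.mem_toFinset.2 hv)
    · rw [vmem_pathEdges (by omega)]
      rw [← List.mem_toFinset, hlS]; exact hn
  · rintro ⟨⟨l, hnd, hlen, hmem, rfl⟩, hvm⟩
    refine ⟨l.toFinset, mem_topSets.2 ⟨?_, ?_, ?_⟩, mem_pathsOn.2 ⟨l, hnd, rfl, rfl⟩⟩
    · intro v hv; exact hmem v (List.mem_toFinset.1 hv)
    · rw [List.mem_toFinset]
      exact (vmem_pathEdges (by omega)).1 hvm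
    · rw [List.toFinset_card_of_nodup hnd, hlen]

lemma vsetF_of_mem_topPaths {t n : ℕ} (ht : 1 ≤ t) {F : Finset (Sym2 ℕ)}
    (hF : F ∈ topPaths t n) : vsetF F ∈ topSets t n ∧ vsetF F ⊆ Finset.range (n + 1)
      ∧ (vsetF F).card = t + 1 ∧ n ∈ vsetF F := by
  obtain ⟨S, hS, hFS⟩ := Finset.mem_biUnion.1 hF
  obtain ⟨hsub, hn, hcard⟩ := mem_topSets.1 hS
  rw [vsetF_of_mem_pathsOn ht hcard hFS]
  exact ⟨hS, hsub, hcard, hn⟩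

lemma card_topPaths {t n : ℕ} (ht : 1 ≤ t) :
    (topPaths t n).card = n.choose t * ((t + 1).factorial / 2) := by
  unfold topPaths
  rw [Finset.card_biUnion]
  · rw [Finset.sum_congr rfl (fun S hS => show (pathsOn S).card = (t + 1).factorial / 2 by
      have h2 := card_pathsOn ht (mem_topSets.1 hS).2.2
      omega)]
    rw [Finset.sum_const, smul_eq_mul, card_topSets]
  · intro S hS S' hS' hne
    rw [Function.onFun, Finset.disjoint_left]
    intro F hF hF'
    have h1 := vsetF_of_mem_pathsOn ht (mem_topSets.1 hS).2.2 hF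
    have h2 := vsetF_of_mem_pathsOn ht (mem_topSets.1 hS').2.2 hF'
    exact hne (h1 ▸ h2 ▸ rfl)

lemma covFinset_zero (t : ℕ) : covFinset t (Finset.range 0) = {∅} := by
  ext C
  rw [mem_covFinset, Finset.mem_singleton]
  constructor
  · intro hC
    by_contra hne
    obtain ⟨E, hE⟩ := Finset.nonempty_iff_ne_empty.2 hne
    obtain ⟨l, hnd, hlen, hmem, rfl⟩ := hC.1 E hE
    have : l ≠ [] := by intro h; rw [h] at hlen; simp at hlen
    obtain ⟨a, r, rfl⟩ := List.exists_cons_of_ne_nil this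
    simpa using hmem a (by simp)
  · rintro rfl
    exact ⟨fun E hE => absurd hE (Finset.notMem_empty E), fun E hE => absurd hE (Finset.notMem_empty E)⟩

lemma Hcomb_zero (t : ℕ) : Hcomb t 0 = 1 := by
  rw [Hcomb_eq_Pgen, Pgen, covFinset_zero]
  simp

lemma covOn_mono {t : ℕ} {V W : Finset ℕ} (h : V ⊆ W) {C : Finset (Finset (Sym2 ℕ))}
    (hC : C ∈ CovOn t V) : C ∈ CovOn t W := by
  refine ⟨fun E hE => ?_, hC.2⟩
  obtain ⟨l, hnd, hlen, hmem, rfl⟩ := hC.1 E hE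
  exact ⟨l, hnd, hlen, fun v hv => h (hmem v hv), rfl⟩

lemma filter_not_covered (t n : ℕ) (ht : 1 ≤ t) :
    (covFinset t (Finset.range (n + 1))).filter (fun C => ¬ ∃ F ∈ C, vmem n F)
      = covFinset t (Finset.range n) := by
  ext C
  rw [Finset.mem_filter, mem_covFinset, mem_covFinset]
  constructor
  · rintro ⟨hC, hncov⟩
    refine ⟨fun E hE => ?_, hC.2⟩
    obtain ⟨l, hnd, hlen, hmem, rfl⟩ := hC.1 E hE
    refine ⟨l, hnd, hlen, fun v hv => ?_, rfl⟩
    have hv1 := Finset.mem_range.1 (hmem v hv)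
    have hvn : v ≠ n := by
      rintro rfl
      exact hncov ⟨pathEdges l, hE, (vmem_pathEdges (by omega)).2 hv⟩
    exact Finset.mem_range.2 (by omega)
  · intro hC
    refine ⟨covOn_mono (by intro v hv; rw [Finset.mem_range] at *; omega) hC, ?_⟩
    rintro ⟨F, hF, hvm⟩
    obtain ⟨l, hnd, hlen, hmem, rfl⟩ := hC.1 F hF
    have := hmem n ((vmem_pathEdges (by omega)).1 hvm)
    simp at this

noncomputable def pickF (n : ℕ) (C : Finset (Finset (Sym2 ℕ))) : Finset (Sym2 ℕ) :=
  if h : ∃ F ∈ C, vmem n F then h.choose else ∅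

lemma pickF_spec {n : ℕ} {C : Finset (Finset (Sym2 ℕ))} (h : ∃ F ∈ C, vmem n F) :
    pickF n C ∈ C ∧ vmem n (pickF n C) := by
  rw [pickF, dif_pos h]
  exact ⟨h.choose_spec.1, h.choose_spec.2⟩

lemma vertex_avoid {t n : ℕ} (ht : 1 ≤ t) {F : Finset (Sym2 ℕ)}
    {C' : Finset (Finset (Sym2 ℕ))}
    (hC' : C' ∈ CovOn t (Finset.range (n + 1) \ vsetF F)) :
    ∀ E ∈ C', ∀ v, vmem v E → v ∉ vsetF F ∧ v ∈ Finset.range (n + 1) := by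
  intro E hE v hv
  obtain ⟨l, hnd, hlen, hmem, rfl⟩ := hC'.1 E hE
  have hvl := (vmem_pathEdges (by omega)).1 hv
  have := Finset.mem_sdiff.1 (hmem v hvl)
  exact ⟨this.2, this.1⟩

lemma sum_covered (t n : ℕ) (ht : 1 ≤ t) :
    ∑ C ∈ (covFinset t (Finset.range (n + 1))).filter (fun C => ∃ F ∈ C, vmem n F),
      ((-1 : Polynomial ℤ) ^ C.card * X ^ ((n + 1) - (t + 1) * C.card))
    = ∑ p ∈ (topPaths t n).sigma (fun F => covFinset t (Finset.range (n + 1) \ vsetF F)),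
      ((-1 : Polynomial ℤ) ^ (p.2.card + 1) * X ^ ((n + 1) - (t + 1) * (p.2.card + 1))) := by
  refine Finset.sum_nbij' (i := fun C => ⟨pickF n C, C.erase (pickF n C)⟩)
    (j := fun p => insert p.1 p.2) ?_ ?_ ?_ ?_ ?_
  · -- forward membership
    intro C hC
    rw [Finset.mem_filter, mem_covFinset] at hC
    obtain ⟨hC, hcov⟩ := hC
    obtain ⟨hFC, hvm⟩ := pickF_spec hcov
    set F := pickF n C with hFdef
    rw [Finset.mem_sigma]
    constructor
    · exact (mem_topPaths ht).2 ⟨hC.1 F hFC, hvm⟩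
    · rw [mem_covFinset]
      refine ⟨fun E hE => ?_, fun E hE E' hE' => hC.2 E (Finset.mem_of_mem_erase hE)
        E' (Finset.mem_of_mem_erase hE')⟩
      have hEC := Finset.mem_of_mem_erase hE
      have hEF := Finset.ne_of_mem_erase hE
      obtain ⟨l, hnd, hlen, hmem, rfl⟩ := hC.1 E hEC
      refine ⟨l, hnd, hlen, fun v hv => Finset.mem_sdiff.2 ⟨hmem v hv, fun hvF => ?_⟩, rfl⟩
      exact hC.2 _ hEC _ hFC hEF v ((vmem_pathEdges (by omega)).2 hv) (mem_vsetF.1 hvF)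
  · -- backward membership
    intro p hp
    rw [Finset.mem_sigma] at hp
    obtain ⟨hF, hC'⟩ := hp
    rw [mem_covFinset] at hC'
    obtain ⟨⟨l, hnd, hlen, hmem, hFeq⟩, hvmn⟩ := (mem_topPaths ht).1 hF
    have hnin : n ∈ vsetF p.1 := mem_vsetF.2 hvmn
    have havoid := vertex_avoid ht hC'
    rw [Finset.mem_filter, mem_covFinset]
    refine ⟨⟨fun E hE => ?_, fun E hE E' hE' hne v hv hv' => ?_⟩,
      ⟨p.1, Finset.mem_insert_self _ _, hvmn⟩⟩
    · rcases Finset.mem_insert.1 hE with rfl | hE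
      · exact ⟨l, hnd, hlen, hmem, hFeq⟩
      · obtain ⟨l', hnd', hlen', hmem', rfl⟩ := hC'.1 E hE
        exact ⟨l', hnd', hlen', fun v hv => (Finset.mem_sdiff.1 (hmem' v hv)).1, rfl⟩
    · rcases Finset.mem_insert.1 hE with rfl | hEm
      · rcases Finset.mem_insert.1 hE' with rfl | hE'm
        · exact hne rfl
        · exact (havoid E' hE'm v hv').1 (mem_vsetF.2 hv)
      · rcases Finset.mem_insert.1 hE' with rfl | hE'm
        · exact (havoid E hEm v hv).1 (mem_vsetF.2 hv')
        · exact hC'.2 E hEm E' hE'm hne v hv hv'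
  · -- left inverse
    intro C hC
    rw [Finset.mem_filter] at hC
    exact Finset.insert_erase (pickF_spec hC.2).1
  · -- right inverse
    intro p hp
    rw [Finset.mem_sigma] at hp
    obtain ⟨hF, hC'⟩ := hp
    rw [mem_covFinset] at hC'
    obtain ⟨-, hvmn⟩ := (mem_topPaths ht).1 hF
    have hnin : n ∈ vsetF p.1 := mem_vsetF.2 hvmn
    have havoid := vertex_avoid ht hC'
    have hnotin : p.1 ∉ p.2 := fun hmem =>
      (havoid p.1 hmem n hvmn).1 hnin
    have hpick : pickF n (insert p.1 p.2) = p.1 := by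
      have hex : ∃ F ∈ insert p.1 p.2, vmem n F := ⟨p.1, Finset.mem_insert_self _ _, hvmn⟩
      obtain ⟨hmem, hvm⟩ := pickF_spec hex
      rcases Finset.mem_insert.1 hmem with h | h
      · exact h
      · exact absurd hnin (havoid _ h n hvm).1
    obtain ⟨F, C'⟩ := p
    simp only at hpick hnotin ⊢
    rw [hpick, Finset.erase_insert hnotin]
  · -- weights
    intro C hC
    rw [Finset.mem_filter] at hC
    have hFC := (pickF_spec hC.2).1
    have hpos : 0 < C.card := Finset.card_pos.2 ⟨_, hFC⟩
    have : (C.erase (pickF n C)).card = C.card - 1 := Finset.card_erase_of_mem hFC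
    simp only
    rw [this, Nat.sub_add_cancel hpos]

theorem hermite_higher_order_recurrence' (t : ℕ) (ht : 1 ≤ t) :
    Hcomb t 0 = 1 ∧
    ∀ n : ℕ, 0 < n → Hcomb t (n + 1)
      = X * Hcomb t n
        - Polynomial.C ((n.choose t * ((t + 1).factorial / 2) : ℕ) : ℤ)
          * Hcomb t (n - t) := by
  refine ⟨Hcomb_zero t, fun n _ => ?_⟩
  rw [Hcomb_eq_Pgen, Pgen, Finset.card_range]
  rw [← Finset.sum_filter_add_sum_filter_not (covFinset t (Finset.range (n + 1)))
    (fun C => ∃ F ∈ C, vmem n F)]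
  have hA : ∑ C ∈ (covFinset t (Finset.range (n + 1))).filter
      (fun C => ¬ ∃ F ∈ C, vmem n F),
      ((-1 : Polynomial ℤ) ^ C.card * X ^ ((n + 1) - (t + 1) * C.card))
      = X * Hcomb t n := by
    rw [filter_not_covered t n ht, Hcomb_eq_Pgen, Pgen, Finset.mul_sum, Finset.card_range]
    refine Finset.sum_congr rfl fun C hC => ?_
    have hle := card_cov_le ht (mem_covFinset.1 hC)
    rw [Finset.card_range] at hle
    have hexp : (n + 1) - (t + 1) * C.card = (n - (t + 1) * C.card) + 1 := by omega
    rw [hexp, pow_succ]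
    ring
  have hB : ∑ C ∈ (covFinset t (Finset.range (n + 1))).filter
      (fun C => ∃ F ∈ C, vmem n F),
      ((-1 : Polynomial ℤ) ^ C.card * X ^ ((n + 1) - (t + 1) * C.card))
      = -(Polynomial.C ((n.choose t * ((t + 1).factorial / 2) : ℕ) : ℤ)
          * Hcomb t (n - t)) := by
    rw [sum_covered t n ht, Finset.sum_sigma]
    have hinner : ∀ F ∈ topPaths t n,
        (∑ C' ∈ covFinset t (Finset.range (n + 1) \ vsetF F),
          ((-1 : Polynomial ℤ) ^ (C'.card + 1) * X ^ ((n + 1) - (t + 1) * (C'.card + 1))))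
        = -(Hcomb t (n - t)) := by
      intro F hF
      obtain ⟨hStop, hsub, hcard, hnS⟩ := vsetF_of_mem_topPaths ht hF
      have htn : t ≤ n := by
        have h1 := Finset.card_le_card hsub
        rw [hcard, Finset.card_range] at h1
        omega
      have hcard2 : (Finset.range (n + 1) \ vsetF F).card = n - t := by
        rw [Finset.card_sdiff_of_subset hsub, Finset.card_range, hcard]
        omega
      have hstep : ∀ C' ∈ covFinset t (Finset.range (n + 1) \ vsetF F),
          ((-1 : Polynomial ℤ) ^ (C'.card + 1) * X ^ ((n + 1) - (t + 1) * (C'.card + 1)))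
          = -((-1 : Polynomial ℤ) ^ C'.card
              * X ^ ((Finset.range (n + 1) \ vsetF F).card - (t + 1) * C'.card)) := by
        intro C' hC'
        have hle := card_cov_le ht (mem_covFinset.1 hC')
        rw [hcard2] at hle
        have hexp : (n + 1) - (t + 1) * (C'.card + 1) = (n - t) - (t + 1) * C'.card := by
          have hmul : (t + 1) * (C'.card + 1) = (t + 1) * C'.card + (t + 1) := by ring
          omega
        rw [hexp, pow_succ, hcard2]
        ring
      rw [Finset.sum_congr rfl hstep, Finset.sum_neg_distrib]
      congr 1
      rw [show (∑ C' ∈ covFinset t (Finset.range (n + 1) \ vsetF F),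
        ((-1 : Polynomial ℤ) ^ C'.card
          * X ^ ((Finset.range (n + 1) \ vsetF F).card - (t + 1) * C'.card)))
        = Pgen t (Finset.range (n + 1) \ vsetF F) from rfl]
      rw [Pgen_congr ht (show (Finset.range (n + 1) \ vsetF F).card
        = (Finset.range (n - t)).card by rw [hcard2, Finset.card_range]),
        ← Hcomb_eq_Pgen]
    rw [Finset.sum_congr rfl hinner, Finset.sum_const, card_topPaths ht]
    rw [nsmul_eq_mul, Polynomial.C_eq_natCast]
    ring
  rw [hA, hB]
  ring
theorem hermite_higher_order_recurrence (t : ℕ) (ht : 1 ≤ t) :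
    Hcomb t 0 = 1 ∧
    ∀ n : ℕ, 0 < n → Hcomb t (n + 1)
      = X * Hcomb t n
        - Polynomial.C ((n.choose t * ((t + 1).factorial / 2) : ℕ) : ℤ)
          * Hcomb t (n - t) := by
  exact hermite_higher_order_recurrence' t ht
end
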